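/- Suppose ν has a generating sequence Q_0 = X, Q_1 = Y, Q_2, … in which every Q_l is an eigenfunction for H_{i,j,t,x}. If N ≥ 1 and Q_N ∈ A_{i,j,t,x}, then Q_M ∈ A_{i,j,t,x} for all M ≥ N. -/

import Mathlib

open MvPolynomial Finset Pointwise

noncomputable section

namespace DuttaPaper

/-- The polynomial ring `K[X,Y]`, with `X = X 0` and `Y = X 1`. -/
abbrev Poly (K : Type) [Field K] : Type := MvPolynomial (Fin 2) K

/-- The rational function field `K(X,Y)`. -/
abbrev RF (K : Type) [Field K] : Type := FractionRing (Poly K)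

variable {K : Type} [Field K]

/-- The `K`-algebra endomorphism of `K[X,Y]` sending `X ↦ u • X`, `Y ↦ v • Y`;
this is the action of `(u,v) ∈ 𝕌_m × 𝕌_n` on `K[X,Y]`. -/
def act (u v : K) : Poly K →ₐ[K] Poly K :=
  MvPolynomial.aeval ![MvPolynomial.C u * MvPolynomial.X 0,
    MvPolynomial.C v * MvPolynomial.X 1]

/-- Membership in the set `H_{i,j,t,x} = {(α^{a i}, β^{b j}) : b ≡ a x (mod t)} ⊆ K × K`. -/
def Hmem (α β : K) (i j t x : ℕ) (p : K × K) : Prop :=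
  ∃ a b : ℤ, b ≡ a * (x : ℤ) [ZMOD (t : ℤ)] ∧
    p = (α ^ (a * (i : ℤ)), β ^ (b * (j : ℤ)))

/-- `f ∈ K[X,Y]` is an eigenfunction for `H_{i,j,t,x}`. -/
def IsEigen (α β : K) (i j t x : ℕ) (f : Poly K) : Prop :=
  ∀ p : K × K, Hmem α β i j t x p → ∃ lam : K, act p.1 p.2 f = lam • f

/-- `f ∈ K[X,Y]` belongs to the invariant ring `A_{i,j,t,x} = K[X,Y]^{H_{i,j,t,x}}`. -/
def Invariant (α β : K) (i j t x : ℕ) (f : Poly K) : Prop :=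
  ∀ p : K × K, Hmem α β i j t x p → act p.1 p.2 f = f

/-- A `ℚ`-valued (rational rank 1) valuation on a field `L`: the data of the values of the
nonzero elements (the value of `0` is irrelevant). -/
structure RatVal (L : Type) [Field L] where
  v : L → ℚ
  v_mul : ∀ a b : L, a ≠ 0 → b ≠ 0 → v (a * b) = v a + v b
  v_add : ∀ a b : L, a ≠ 0 → b ≠ 0 → a + b ≠ 0 → min (v a) (v b) ≤ v (a + b)

/-- Value of a polynomial under a valuation of `K(X,Y)`. -/
def vP (ν : RatVal (RF K)) (f : Poly K) : ℚ :=
  ν.v (algebraMap (Poly K) (RF K) f)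

/-- `ν` dominates `R_𝔪 = K[X,Y]_{(X,Y)}` : `ν ≥ 0` on `R_𝔪` and `ν > 0` on its maximal
ideal (expressed on the level of polynomials). -/
def DominatesRm (ν : RatVal (RF K)) : Prop :=
  (∀ f : Poly K, f ≠ 0 → 0 ≤ vP ν f) ∧
  (∀ f : Poly K, f ≠ 0 → MvPolynomial.constantCoeff f = 0 → 0 < vP ν f)

/-- `ν` is non-discrete: its value group is not a cyclic subgroup of `ℚ`. -/
def Nondiscrete (ν : RatVal (RF K)) : Prop :=
  ¬ ∃ g : ℚ, ∀ z : RF K, z ≠ 0 → ∃ k : ℤ, ν.v z = (k : ℚ) * g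

/-- Data of a candidate generating sequence: the polynomials `Q_l` and the numbers `m̄_l`. -/
structure GSData (K : Type) [Field K] where
  Q : ℕ → Poly K
  mbar : ℕ → ℕ

/-- `γ_l = ν(Q_l)`. -/
def GSData.γ (G : GSData K) (ν : RatVal (RF K)) (l : ℕ) : ℚ := vP ν (G.Q l)

/-- `d(l) = m̄_1 ⋯ m̄_{l-1}` (so `d(1) = 1`). -/
def GSData.d (G : GSData K) (l : ℕ) : ℕ := ∏ k ∈ Finset.Icc 1 (l - 1), G.mbar k

/-- An exponent vector `e` is admissible when `e k < m̄_k` for all `k ≥ 1`. -/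
def Adm (G : GSData K) (e : ℕ →₀ ℕ) : Prop := ∀ k, 1 ≤ k → e k < G.mbar k

/-- The monomial `X^{e 0} Q_1^{e 1} Q_2^{e 2} ⋯` in the generating sequence. -/
def Pmon (G : GSData K) (e : ℕ →₀ ℕ) : Poly K := e.prod fun k a => G.Q k ^ a

/-- The value `Σ_k e k • γ_k` of such a monomial. -/
def evalγ (ν : RatVal (RF K)) (G : GSData K) (e : ℕ →₀ ℕ) : ℚ :=
  e.sum fun k a => (a : ℚ) * G.γ ν k

/-- `(Q_l)_{l≥0}` is a generating sequence for `ν` in `K[X,Y]` (properties (1)–(4) of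
Section 2 of the paper, for the algorithm of Cutkosky–Vinh). -/
structure IsGenSeq (ν : RatVal (RF K)) (G : GSData K) : Prop where
  hQ0 : G.Q 0 = MvPolynomial.X 0
  hQ1 : G.Q 1 = MvPolynomial.X 1
  /-- `m̄_l ≥ 1`. -/
  hmbar_pos : ∀ l, 1 ≤ l → 0 < G.mbar l
  /-- `m̄_l γ_l ∈ G(γ_0, …, γ_{l-1})`. -/
  hmbar_mem : ∀ l, 1 ≤ l → ∃ c : ℕ → ℤ,
      (G.mbar l : ℚ) * G.γ ν l = ∑ k ∈ Finset.range l, (c k : ℚ) * G.γ ν k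
  /-- `m̄_l` is minimal with this property. -/
  hmbar_min : ∀ l, 1 ≤ l → ∀ q : ℕ, 0 < q →
      (∃ c : ℕ → ℤ, (q : ℚ) * G.γ ν l = ∑ k ∈ Finset.range l, (c k : ℚ) * G.γ ν k) →
      G.mbar l ≤ q
  /-- (1) `γ_{l+1} > m̄_l γ_l`. -/
  hgrowth : ∀ l, 1 ≤ l → (G.mbar l : ℚ) * G.γ ν l < G.γ ν (l + 1)
  /-- (2) `Q_l = Y^{d(l)} + (terms of lower Y-degree)`. -/
  hmonic : ∀ l, 1 ≤ l →
      G.Q l - MvPolynomial.X 1 ^ G.d l = 0 ∨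
      MvPolynomial.degreeOf 1 (G.Q l - MvPolynomial.X 1 ^ G.d l) < G.d l
  /-- (3), existence and uniqueness of the expansion of any nonzero `f` in terms of the
  admissible monomials `X^{e 0} Q_1^{e 1} ⋯ Q_r^{e r}`, `e k < m̄_k` for `k ≥ 1`. -/
  hexpand : ∀ f : Poly K, f ≠ 0 →
      ∃! c : (ℕ →₀ ℕ) →₀ K,
        (∀ e ∈ c.support, Adm G e) ∧
        f = c.sum fun e a => MvPolynomial.C a * Pmon G e
  /-- (3), the nonzero terms of the expansion have pairwise distinct values and
  `ν(f)` is the minimum of those values. -/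
  hval : ∀ f : Poly K, f ≠ 0 → ∀ c : (ℕ →₀ ℕ) →₀ K,
      (∀ e ∈ c.support, Adm G e) →
      f = (c.sum fun e a => MvPolynomial.C a * Pmon G e) →
      (∀ e ∈ c.support, ∀ e' ∈ c.support, evalγ ν G e = evalγ ν G e' → e = e') ∧
      ∃ e₀ ∈ c.support, vP ν f = evalγ ν G e₀ ∧
        ∀ e ∈ c.support, evalγ ν G e₀ ≤ evalγ ν G e
  /-- (4) `Q_{l+1} = Q_l^{m̄_l} - λ_l X^{c_0} Y^{c_1} Q_2^{c_2} ⋯ Q_{l-1}^{c_{l-1}}` with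
  `0 ≤ c_k < m̄_k` for `k ≥ 1` and `m̄_l γ_l = Σ_{k<l} c_k γ_k`. -/
  hrec : ∀ l, 1 ≤ l → ∃ lam : K, lam ≠ 0 ∧ ∃ cc : ℕ → ℕ,
      (∀ k, 1 ≤ k → k < l → cc k < G.mbar k) ∧
      G.Q (l + 1) =
        G.Q l ^ G.mbar l - MvPolynomial.C lam * ∏ k ∈ Finset.range l, G.Q k ^ cc k ∧
      (G.mbar l : ℚ) * G.γ ν l = ∑ k ∈ Finset.range l, (cc k : ℚ) * G.γ ν k

/-- The valuation semigroup `S^{R_𝔪}(ν) = {ν(h) : 0 ≠ h ∈ R_𝔪}`. -/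
def SRm (ν : RatVal (RF K)) : Set ℚ :=
  {q | ∃ f g : Poly K, f ≠ 0 ∧ MvPolynomial.constantCoeff g ≠ 0 ∧
    q = vP ν f - vP ν g}

/-- The valuation semigroup `S^{(A_{i,j,t,x})_𝔫}(ν)` of the invariant ring localized at
`𝔫 = (X,Y) ∩ A_{i,j,t,x}`. -/
def SA (ν : RatVal (RF K)) (α β : K) (i j t x : ℕ) : Set ℚ :=
  {q | ∃ f g : Poly K, f ≠ 0 ∧ Invariant α β i j t x f ∧ Invariant α β i j t x g ∧
    MvPolynomial.constantCoeff g ≠ 0 ∧ q = vP ν f - vP ν g}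

/-- `S` is a finitely generated module over the subsemigroup `T`:
`S = {s_1, …, s_k} + T` for finitely many `s_i ∈ S`. -/
def FGover (S T : Set ℚ) : Prop :=
  ∃ F : Finset ℚ, (F : Set ℚ) ⊆ S ∧ S = (F : Set ℚ) + T



namespace DuttaPaperAux

variable {K : Type} [Field K]

lemma vP_mul (ν : RatVal (RF K)) (f g : Poly K) (hf : f ≠ 0) (hg : g ≠ 0) :
    vP ν (f * g) = vP ν f + vP ν g := by
  have inj : Function.Injective (algebraMap (Poly K) (RF K)) :=
    IsFractionRing.injective (Poly K) (RF K)
  unfold vP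
  rw [map_mul]
  exact ν.v_mul _ _ ((map_ne_zero_iff _ inj).mpr hf) ((map_ne_zero_iff _ inj).mpr hg)

lemma vP_one (ν : RatVal (RF K)) : vP ν (1 : Poly K) = 0 := by
  have h := vP_mul ν 1 1 one_ne_zero one_ne_zero
  rw [mul_one] at h
  linarith

lemma vP_C (ν : RatVal (RF K)) (hdom : DominatesRm ν) (c : K) (hc : c ≠ 0) :
    vP ν (MvPolynomial.C c) = 0 := by
  have hC : (MvPolynomial.C c : Poly K) ≠ 0 := by
    simpa using hc
  have hCi : (MvPolynomial.C c⁻¹ : Poly K) ≠ 0 := by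
    simpa using inv_ne_zero hc
  have hsum : vP ν (MvPolynomial.C c) + vP ν (MvPolynomial.C c⁻¹) = 0 := by
    rw [← vP_mul ν _ _ hC hCi, ← map_mul, mul_inv_cancel₀ hc, map_one, vP_one]
  have h1 := hdom.1 _ hC
  have h2 := hdom.1 _ hCi
  linarith

lemma vP_pow (ν : RatVal (RF K)) (f : Poly K) (hf : f ≠ 0) (c : ℕ) :
    vP ν (f ^ c) = (c : ℚ) * vP ν f := by
  induction c with
  | zero => simp [vP_one ν]
  | succ d hd =>
      rw [pow_succ, vP_mul ν _ _ (pow_ne_zero d hf) hf, hd]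
      push_cast
      ring

lemma vP_prod (ν : RatVal (RF K)) (s : Finset ℕ) (f : ℕ → Poly K)
    (hf : ∀ k ∈ s, f k ≠ 0) :
    vP ν (∏ k ∈ s, f k) = ∑ k ∈ s, vP ν (f k) := by
  classical
  induction s using Finset.induction with
  | empty => simpa using vP_one ν
  | insert _ _ hnot ih =>
      rename_i a s'
      rw [Finset.prod_insert hnot, Finset.sum_insert hnot,
        vP_mul ν _ _ (hf a (Finset.mem_insert_self a s'))
          (Finset.prod_ne_zero_iff.mpr fun k hk => hf k (Finset.mem_insert_of_mem hk)),
        ih (fun k hk => hf k (Finset.mem_insert_of_mem hk))]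

lemma Q_ne_zero {ν : RatVal (RF K)} {G : GSData K} (hG : IsGenSeq ν G) (l : ℕ) :
    G.Q l ≠ 0 := by
  rcases Nat.eq_zero_or_pos l with h0 | h1
  · subst h0
    rw [hG.hQ0]
    exact MvPolynomial.X_ne_zero 0
  · intro h
    have hxd : MvPolynomial.degreeOf 1 ((MvPolynomial.X 1 : Poly K) ^ G.d l) = G.d l := by
      simp [MvPolynomial.X_pow_eq_monomial, MvPolynomial.degreeOf_monomial_eq]
    rcases hG.hmonic l h1 with hc | hc
    · rw [h, zero_sub, neg_eq_zero] at hc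
      exact pow_ne_zero _ (MvPolynomial.X_ne_zero 1) hc
    · rw [h, zero_sub, MvPolynomial.degreeOf_neg, hxd] at hc
      exact lt_irrefl _ hc

end DuttaPaperAux

open DuttaPaperAux

/-- if `Q_N` is invariant for some `N ≥ 1`, then so is `Q_M` for all `M ≥ N`. -/
theorem stmt_6 (K : Type) [Field K] [IsAlgClosed K] [CharZero K]
    (m n : ℕ) (hm : 0 < m) (hn : 0 < n) (α β : K)
    (hα : IsPrimitiveRoot α m) (hβ : IsPrimitiveRoot β n)
    (i j t x : ℕ) (hi : 0 < i) (hj : 0 < j) (ht : 0 < t)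
    (him : i ∣ m) (hjn : j ∣ n) (hti : t ∣ m / i) (htj : t ∣ n / j)
    (hxt : Nat.gcd x t = 1) (hx1 : 1 ≤ x) (hxle : x ≤ t)
    (ν : RatVal (RF K)) (hdom : DominatesRm ν) (hnd : Nondiscrete ν)
    (G : GSData K) (hG : IsGenSeq ν G)
    (heig : ∀ l, IsEigen α β i j t x (G.Q l))
    (N : ℕ) (hN : 1 ≤ N) (hQN : Invariant α β i j t x (G.Q N)) :
    ∀ M, N ≤ M → Invariant α β i j t x (G.Q M) := by
  intro M hM
  induction M, hM using Nat.le_induction with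
  | base => exact hQN
  | succ l hl ih =>
    have hl1 : 1 ≤ l := le_trans hN hl
    intro p hp
    obtain ⟨μ, hμ⟩ := heig (l + 1) p hp
    obtain ⟨lam, hlam0, cc, hcc, hrecEq, hvalEq⟩ := hG.hrec l hl1
    classical
    set P : Poly K := ∏ k ∈ Finset.range l, G.Q k ^ cc k with hP
    have hQne : ∀ k, G.Q k ≠ 0 := Q_ne_zero hG
    have hPne : P ≠ 0 :=
      Finset.prod_ne_zero_iff.mpr fun k _ => pow_ne_zero _ (hQne k)
    -- eigenvalues for each Q_k
    have hlamk : ∀ k, ∃ lamk : K, act p.1 p.2 (G.Q k) = lamk • G.Q k := fun k => heig k p hp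
    choose lamk hlamkEq using hlamk
    set Λ : K := ∏ k ∈ Finset.range l, lamk k ^ cc k with hΛ
    -- action on P
    have hactP : act p.1 p.2 P = MvPolynomial.C Λ * P := by
      rw [hP, map_prod]
      calc (∏ k ∈ Finset.range l, act p.1 p.2 (G.Q k ^ cc k))
          = ∏ k ∈ Finset.range l, (MvPolynomial.C (lamk k ^ cc k) * G.Q k ^ cc k) := by
            refine Finset.prod_congr rfl fun k _ => ?_
            rw [map_pow, hlamkEq k, MvPolynomial.smul_eq_C_mul, mul_pow, ← map_pow]
        _ = (∏ k ∈ Finset.range l, MvPolynomial.C (lamk k ^ cc k)) *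
              ∏ k ∈ Finset.range l, G.Q k ^ cc k := Finset.prod_mul_distrib
        _ = MvPolynomial.C Λ * P := by rw [hΛ, map_prod, hP]
    -- key equation
    have key : MvPolynomial.C μ * G.Q (l + 1)
        = G.Q l ^ G.mbar l - MvPolynomial.C (lam * Λ) * P := by
      rw [← MvPolynomial.smul_eq_C_mul, ← hμ, hrecEq, map_sub, map_pow, ih p hp,
        map_mul, hactP]
      rw [MvPolynomial.algHom_C, MvPolynomial.algebraMap_eq, map_mul]
      ring
    by_cases hμ1 : μ = 1
    · rw [hμ, hμ1, one_smul]
    · exfalso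
      have hQl1ne : G.Q (l + 1) ≠ 0 := hQne (l + 1)
      -- subtract the recursion from key
      have key2 : MvPolynomial.C (μ - 1) * G.Q (l + 1)
          = MvPolynomial.C (lam * (1 - Λ)) * P := by
        have := hrecEq
        rw [map_sub, map_one, sub_mul, one_mul, key, this]
        simp only [map_mul, map_sub, map_one]
        ring
      set s : K := (μ - 1)⁻¹ * (lam * (1 - Λ)) with hs
      have hQeq : G.Q (l + 1) = MvPolynomial.C s * P := by
        have hμne : μ - 1 ≠ 0 := sub_ne_zero.mpr hμ1
        have : MvPolynomial.C ((μ - 1)⁻¹) * (MvPolynomial.C (μ - 1) * G.Q (l + 1))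
            = MvPolynomial.C ((μ - 1)⁻¹) * (MvPolynomial.C (lam * (1 - Λ)) * P) := by
          rw [key2]
        rwa [← mul_assoc, ← mul_assoc, ← map_mul, inv_mul_cancel₀ hμne, map_one,
          one_mul, ← map_mul] at this
      have hsne : s ≠ 0 := by
        intro h0
        rw [h0, map_zero, zero_mul] at hQeq
        exact hQl1ne hQeq
      -- compute the value of Q_{l+1}
      have hvQ : vP ν (G.Q (l + 1)) = (G.mbar l : ℚ) * G.γ ν l := by
        rw [hQeq, vP_mul ν _ _ (by simpa using hsne) hPne, vP_C ν hdom s hsne, zero_add,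
          hP, vP_prod ν _ _ (fun k _ => pow_ne_zero _ (hQne k)), hvalEq]
        refine Finset.sum_congr rfl fun k _ => ?_
        rw [vP_pow ν _ (hQne k)]
        rfl
      have hgr := hG.hgrowth l hl1
      rw [show G.γ ν (l + 1) = vP ν (G.Q (l + 1)) from rfl, hvQ] at hgr
      exact lt_irrefl _ hgr

end DuttaPaper
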